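/- (Theorem 1 of the paper) Suppose solutions are ranked separately by each of two objectives, where rank r_i : S → ℕ is strictly compatible with objective F_i in the sense that F_i(a) > F_i(b) implies r_i(a) < r_i(b), and F_i(a) = F_i(b) implies r_i(a) = r_i(b). Then any solution a* minimizing the comprehensive ranking R(a) = r_1(a) + r_2(a) over a finite set S is Pareto optimal in S. -/
import Mathlib


/-- Pareto dominance for a two-objective function. -/
def Dominates {α : Type*} (F : α → ℝ × ℝ) (a b : α) : Prop :=
  (F b).1 ≤ (F a).1 ∧ (F b).2 ≤ (F a).2 ∧ ((F b).1 < (F a).1 ∨ (F b).2 < (F a).2)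

/-- Theorem 1: a minimizer of the comprehensive ranking R = r₁ + r₂ is Pareto optimal. -/
theorem comprehensive_ranking_minimizer_pareto_optimal
    {α : Type*} (S : Finset α) (F : α → ℝ × ℝ) (r₁ r₂ : α → ℕ)
    (h1_strict : ∀ a b, (F a).1 > (F b).1 → r₁ a < r₁ b)
    (h1_eq : ∀ a b, (F a).1 = (F b).1 → r₁ a = r₁ b)
    (h2_strict : ∀ a b, (F a).2 > (F b).2 → r₂ a < r₂ b)
    (h2_eq : ∀ a b, (F a).2 = (F b).2 → r₂ a = r₂ b)
    (astar : α) (hastar : astar ∈ S)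
    (hmin : ∀ b ∈ S, r₁ astar + r₂ astar ≤ r₁ b + r₂ b) :
    ∀ b ∈ S, ¬ Dominates F b astar := by
  intro b hb hdom
  obtain ⟨h1, h2, hst⟩ := hdom
  have hr1 : r₁ b ≤ r₁ astar := by
    rcases lt_or_eq_of_le h1 with h | h
    · exact (h1_strict b astar h).le
    · exact (h1_eq b astar h.symm).le
  have hr2 : r₂ b ≤ r₂ astar := by
    rcases lt_or_eq_of_le h2 with h | h
    · exact (h2_strict b astar h).le
    · exact (h2_eq b astar h.symm).le
  have hlt : r₁ b + r₂ b < r₁ astar + r₂ astar := by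
    rcases hst with h | h
    · exact Nat.add_lt_add_of_lt_of_le (h1_strict b astar h) hr2
    · exact Nat.add_lt_add_of_le_of_lt hr1 (h2_strict b astar h)
  exact absurd (hmin b hb) (not_le.mpr hlt)
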